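/- Let f be a barcode with n = Multiset.card f ≥ 2 bars and drift Δ(f). Then the birth series of the (n−1)-th exterior power is the reflection of the birth series of f about Δ(f): for every β ∈ ℝ, B(f^∧(n−1))(β) = B(f)(Δ(f) − β). Equivalently, B(f) is obtained from B(f^∧(n−1)) by substituting 1/x for x and multiplying by x^{Δ(f)}. -/
import Mathlib

noncomputable section

/-- A barcode: a finite multiset of bars `(α, ℓ)` with positive lifespan `ℓ`. -/
def IsBarcode (f : Multiset (ℝ × ℝ)) : Prop := ∀ b ∈ f, (0 : ℝ) < b.2

/-- The `p`-th exterior power of a barcode: each `p`-element sub-multiset `s`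
contributes the bar whose birth grade is the sum of the birth grades in `s`
and whose lifespan is the minimum of the lifespans in `s`. -/
noncomputable def extPow (f : Multiset (ℝ × ℝ)) (p : ℕ) : Multiset (ℝ × ℝ) :=
  (Multiset.powersetCard p f).map
    (fun s => ((s.map Prod.fst).sum, sInf {x : ℝ | x ∈ s.map Prod.snd}))

/-- The birth series `B(f) = Σ_{(α,ℓ)∈f} x^α`. -/
noncomputable def birthSeries (f : Multiset (ℝ × ℝ)) : ℝ →₀ ℤ :=
  (f.map (fun b => Finsupp.single b.1 (1 : ℤ))).sum

/-- The death series `D(f) = Σ_{(α,ℓ)∈f} x^{α+ℓ}`. -/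
noncomputable def deathSeries (f : Multiset (ℝ × ℝ)) : ℝ →₀ ℤ :=
  (f.map (fun b => Finsupp.single (b.1 + b.2) (1 : ℤ))).sum

/-- The critical series `C(f) = B(f) − D(f)`. -/
noncomputable def critSeries (f : Multiset (ℝ × ℝ)) : ℝ →₀ ℤ :=
  birthSeries f - deathSeries f

/-- The lifespan series `L(f) = Σ_{(α,ℓ)∈f} x^ℓ`. -/
noncomputable def lifespanSeries (f : Multiset (ℝ × ℝ)) : ℝ →₀ ℤ :=
  (f.map (fun b => Finsupp.single b.2 (1 : ℤ))).sum

/-- The drift `Δ(f) = Σ_{(α,ℓ)∈f} α`. -/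
noncomputable def drift (f : Multiset (ℝ × ℝ)) : ℝ :=
  (f.map Prod.fst).sum

/-- The moment `μ(P) = Σ_β P(β)·β`. -/
noncomputable def moment (P : ℝ →₀ ℤ) : ℝ :=
  P.sum fun β n => (n : ℝ) * β

/-- The second moment `μ₂(P) = Σ_β P(β)·β²`. -/
noncomputable def moment2 (P : ℝ →₀ ℤ) : ℝ :=
  P.sum fun β n => (n : ℝ) * β ^ 2

end

lemma powersetCard_card_self {α : Type*} (s : Multiset α) :
    Multiset.powersetCard (Multiset.card s) s = {s} := by
  have h1 : Multiset.card (Multiset.powersetCard (Multiset.card s) s) = 1 := by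
    rw [Multiset.card_powersetCard, Nat.choose_self]
  obtain ⟨a, ha⟩ := Multiset.card_eq_one.mp h1
  have hmem : a ∈ Multiset.powersetCard (Multiset.card s) s := by rw [ha]; simp
  rw [Multiset.mem_powersetCard] at hmem
  rw [ha, Multiset.eq_of_le_of_card_le hmem.1 hmem.2.ge]

lemma powersetCard_pred {α : Type*} [DecidableEq α] :
    ∀ (s : Multiset α) (n : ℕ), Multiset.card s = n + 1 →
      Multiset.powersetCard n s = s.map s.erase := by
  intro s
  induction s using Multiset.induction with
  | empty => intro n h; simp at h
  | cons a t ih =>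
    intro n h
    rw [Multiset.card_cons] at h
    have ht : Multiset.card t = n := by omega
    cases n with
    | zero =>
      have h0 : t = 0 := Multiset.card_eq_zero.mp ht
      subst h0
      simp
    | succ m =>
      rw [Multiset.powersetCard_cons]
      have h1 : Multiset.powersetCard (m + 1) t = {t} := by
        rw [← ht]; exact powersetCard_card_self t
      have h2 : Multiset.powersetCard m t = t.map t.erase := ih m ht
      rw [h1, h2, Multiset.map_cons, Multiset.erase_cons_head]
      have h3 : t.map ((a ::ₘ t).erase) = t.map (fun b => a ::ₘ t.erase b) := by
        apply Multiset.map_congr rfl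
        intro b hb
        by_cases hba : b = a
        · subst hba
          rw [Multiset.erase_cons_head, Multiset.cons_erase hb]
        · rw [Multiset.erase_cons_tail]
          exact fun hab => hba hab.symm
      rw [h3, Multiset.map_map]
      simp [Multiset.singleton_add, Function.comp]

lemma birthSeries_apply (g : Multiset (ℝ × ℝ)) (β : ℝ) :
    birthSeries g β = (g.map (fun b => if b.1 = β then (1 : ℤ) else 0)).sum := by
  classical
  unfold birthSeries
  rw [← Finsupp.applyAddHom_apply, map_multiset_sum, Multiset.map_map]
  congr 1
  apply Multiset.map_congr rfl
  intro b _
  simp [Finsupp.single_apply]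

/-- `B(f^∧(n−1))` is the reflection of `B(f)` about `Δ(f)`. -/
theorem birthSeries_extPow_pred_card
    (f : Multiset (ℝ × ℝ)) (hf : IsBarcode f)
    (n : ℕ) (hn : n = Multiset.card f) (hn2 : 2 ≤ n) :
    ∀ β : ℝ, birthSeries (extPow f (n - 1)) β = birthSeries f (drift f - β) := by
  classical
  intro β
  have hcard : Multiset.card f = (n - 1) + 1 := by omega
  have hpow : Multiset.powersetCard (n - 1) f = f.map f.erase :=
    powersetCard_pred f (n - 1) hcard
  rw [birthSeries_apply, birthSeries_apply, extPow, hpow, Multiset.map_map,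
    Multiset.map_map]
  congr 1
  apply Multiset.map_congr rfl
  intro a ha
  have hsum : ((f.erase a).map Prod.fst).sum = drift f - a.1 := by
    have hc : a ::ₘ f.erase a = f := Multiset.cons_erase ha
    have : drift f = a.1 + ((f.erase a).map Prod.fst).sum := by
      conv_lhs => rw [drift, ← hc]
      rw [Multiset.map_cons, Multiset.sum_cons]
    linarith
  simp only [Function.comp_apply, hsum]
  congr 1
  simp only [eq_iff_iff]
  constructor <;> intro h <;> linarith
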